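/- Let I ⊆ ℝ be a nonempty interval, n ≥ 2, and let f₁,…,fₙ, g₁,…,gₙ : I → ℝ be differentiable strictly increasing functions such that (fᵢ+gᵢ)′ does not vanish on I for every i ∈ {1,…,n}. Assume aᵢ := sup_{t∈I} fᵢ′(t)/(f_{i−1}′(t)+g_{i−1}′(t)) < +∞ for i ∈ {2,…,n} and bᵢ := sup_{t∈I} gᵢ′(t)/(f_{i+1}′(t)+g_{i+1}′(t)) < +∞ for i ∈ {1,…,n−1}. For x < y in I, let φ_{(x,y)}(t₁,…,tₙ) := (M_{f₁,g₁}(x,t₂), M_{f₂,g₂}(t₁,t₃), …, M_{fₙ,gₙ}(t_{n−1},y)) on [x,y]ⁿ_≤. Then for every x < y in I the fixed point set Φ_{(x,y)} is a nonempty compact subset of [x,y]ⁿ_≤, and it is a singleton if w₁,…,w_{n−1} > 0, where w₋₁ := w₀ := 1 and wᵢ := w_{i−1} − a_{i+1} bᵢ w_{i−2} for i ∈ {1,…,n−1}. -/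
import Mathlib


/-- `M` is a two-variable mean on `I` (its values on pairs `x > y` are irrelevant). -/
def IsMeanOn (I : Set ℝ) (M : ℝ → ℝ → ℝ) : Prop :=
  ∀ x ∈ I, ∀ y ∈ I, x ≤ y → x ≤ M x y ∧ M x y ≤ y

/-- `M` is a strict two-variable mean on `I`. -/
def IsStrictMeanOn (I : Set ℝ) (M : ℝ → ℝ → ℝ) : Prop :=
  IsMeanOn I M ∧ ∀ x ∈ I, ∀ y ∈ I, x < y → x < M x y ∧ M x y < y

/-- The map `φ_{(x,y)}(t₁,…,tₙ) = (M₁(x,t₂), M₂(t₁,t₃), …, Mₙ(t_{n-1},y))`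
(0-indexed: `M i` is the paper's `M_{i+1}`). -/
def phiMap (n : ℕ) (M : Fin n → ℝ → ℝ → ℝ) (x y : ℝ) (t : Fin n → ℝ) : Fin n → ℝ :=
  fun i =>
    M i (if _h : (i : ℕ) = 0 then x else t ⟨(i : ℕ) - 1, by have := i.isLt; omega⟩)
        (if _h : (i : ℕ) = n - 1 then y else t ⟨(i : ℕ) + 1, by have := i.isLt; omega⟩)

/-- The fixed point set `Φ_{(x,y)} = {ξ ∈ [x,y]ⁿ_≤ : φ_{(x,y)}(ξ) = ξ}`. -/
def phiFixedSet (n : ℕ) (M : Fin n → ℝ → ℝ → ℝ) (x y : ℝ) : Set (Fin n → ℝ) :=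
  {t | (∀ i, t i ∈ Set.Icc x y) ∧ Monotone t ∧ phiMap n M x y t = t}


open Set Filter Topology

lemma aux_nonneg_deriv {I : Set ℝ} (hI : I.OrdConnected) {x y : ℝ} (hx : x ∈ I) (hy : y ∈ I)
    (hxy : x < y) {F : ℝ → ℝ} (hm : MonotoneOn F I) {t d : ℝ} (ht : t ∈ I)
    (hd : HasDerivWithinAt F d I t) : 0 ≤ d := by
  rw [hasDerivWithinAt_iff_tendsto_slope] at hd
  have hslope : ∀ u ∈ I \ {t}, 0 ≤ slope F t u := by
    intro u hu
    rcases lt_or_gt_of_ne hu.2 with h | h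
    · rw [slope_def_field]
      refine div_nonneg_iff.mpr (Or.inr ⟨?_, ?_⟩)
      · simpa using hm hu.1 ht h.le
      · linarith
    · rw [slope_def_field]
      apply div_nonneg
      · simpa using hm ht hu.1 h.le
      · linarith
  haveI hne : (𝓝[I \ {t}] t).NeBot := by
    rcases lt_or_ge t y with h | h
    · have hsub : Ioo t y ⊆ I \ {t} := by
        intro u hu
        exact ⟨hI.out ht hy ⟨hu.1.le, hu.2.le⟩, ne_of_gt hu.1⟩
      have : (𝓝[Ioo t y] t).NeBot := by
        rw [← mem_closure_iff_nhdsWithin_neBot, closure_Ioo h.ne]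
        exact ⟨le_rfl, h.le⟩
      exact this.mono (nhdsWithin_mono _ hsub)
    · have hxt : x < t := lt_of_lt_of_le hxy h
      have hsub : Ioo x t ⊆ I \ {t} := by
        intro u hu
        exact ⟨hI.out hx ht ⟨hu.1.le, hu.2.le⟩, ne_of_lt hu.2⟩
      have : (𝓝[Ioo x t] t).NeBot := by
        rw [← mem_closure_iff_nhdsWithin_neBot, closure_Ioo hxt.ne]
        exact ⟨hxt.le, le_rfl⟩
      exact this.mono (nhdsWithin_mono _ hsub)
  exact ge_of_tendsto hd (eventually_nhdsWithin_of_forall hslope)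

lemma aux_mvt {I : Set ℝ} (hI : I.OrdConnected) {F G F' G' : ℝ → ℝ}
    (hF : ∀ t ∈ I, HasDerivWithinAt F (F' t) I t)
    (hG : ∀ t ∈ I, HasDerivWithinAt G (G' t) I t)
    {c : ℝ} (hc : ∀ t ∈ I, F' t ≤ c * G' t)
    {u v : ℝ} (hu : u ∈ I) (hv : v ∈ I) (huv : u ≤ v) :
    F v - F u ≤ c * (G v - G u) := by
  have hsub : Icc u v ⊆ I := hI.out hu hv
  set P : ℝ → ℝ := fun t => c * G t - F t with hP
  have hPd : ∀ t ∈ I, HasDerivWithinAt P (c * G' t - F' t) I t := fun t ht =>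
    ((hG t ht).const_mul c).sub (hF t ht)
  have hderiv : ∀ t ∈ Ioo u v, HasDerivAt P (c * G' t - F' t) t := by
    intro t ht
    have hIn : I ∈ 𝓝 t := mem_of_superset (Icc_mem_nhds ht.1 ht.2) hsub
    exact (hPd t (hsub ⟨ht.1.le, ht.2.le⟩)).hasDerivAt hIn
  have hmono : MonotoneOn P (Icc u v) := by
    apply monotoneOn_of_deriv_nonneg (convex_Icc u v)
    · exact fun t ht => ((hPd t (hsub ht)).continuousWithinAt).mono hsub
    · intro t ht
      rw [interior_Icc] at ht
      exact (hderiv t ht).differentiableAt.differentiableWithinAt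
    · intro t ht
      rw [interior_Icc] at ht
      rw [(hderiv t ht).deriv]
      have := hc t (hsub ⟨ht.1.le, ht.2.le⟩)
      linarith
  have := hmono (left_mem_Icc.2 huv) (right_mem_Icc.2 huv) huv
  simp only [hP] at this
  linarith

lemma aux_inv {x y : ℝ} (hxy : x ≤ y) (φ : ℝ → ℝ) (hm : StrictMonoOn φ (Set.Icc x y))
    (hc : ContinuousOn φ (Set.Icc x y)) :
    ∃ ζ : ℝ → ℝ, Continuous ζ ∧ (∀ c, ζ c ∈ Set.Icc x y) ∧
      ∀ c ∈ Set.Icc (φ x) (φ y), φ (ζ c) = c := by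
  have hxm : x ∈ Icc x y := left_mem_Icc.2 hxy
  have hym : y ∈ Icc x y := right_mem_Icc.2 hxy
  have hφxy : φ x ≤ φ y := hm.monotoneOn hxm hym hxy
  have hmapsto : ∀ u ∈ Icc x y, φ u ∈ Icc (φ x) (φ y) := fun u hu =>
    ⟨hm.monotoneOn hxm hu hu.1, hm.monotoneOn hu hym hu.2⟩
  set e : Icc x y → Icc (φ x) (φ y) := fun u => ⟨φ u, hmapsto u u.2⟩ with he
  have hbij : Function.Bijective e := by
    constructor
    · intro u v huv
      exact Subtype.ext (hm.injOn u.2 v.2 (congrArg Subtype.val huv))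
    · rintro ⟨c, hc'⟩
      obtain ⟨u, hu, huc⟩ := intermediate_value_Icc hxy hc hc'
      exact ⟨⟨u, hu⟩, Subtype.ext huc⟩
  set E : Icc x y ≃ Icc (φ x) (φ y) := Equiv.ofBijective e hbij with hE
  have hcontE : Continuous (E : Icc x y → Icc (φ x) (φ y)) := by
    apply Continuous.subtype_mk
    exact hc.restrict
  let homeo : Icc x y ≃ₜ Icc (φ x) (φ y) := hcontE.homeoOfEquivCompactToT2
  -- careful: homeoOfEquivCompactToT2 uses the Equiv E
  refine ⟨fun c => (homeo.symm (projIcc (φ x) (φ y) hφxy c) : ℝ), ?_, ?_, ?_⟩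
  · exact continuous_subtype_val.comp (homeo.symm.continuous.comp continuous_projIcc)
  · exact fun c => (homeo.symm _).2
  · intro c hcm
    have h1 : projIcc (φ x) (φ y) hφxy c = ⟨c, hcm⟩ := projIcc_of_mem hφxy hcm
    show φ ((homeo.symm (projIcc (φ x) (φ y) hφxy c)) : ℝ) = c
    rw [h1]
    have h2 : homeo (homeo.symm ⟨c, hcm⟩) = ⟨c, hcm⟩ := homeo.apply_symm_apply _
    have h3 : ∀ u : Icc x y, (homeo u : ℝ) = φ u := fun u => rfl
    calc φ (homeo.symm ⟨c, hcm⟩ : ℝ) = (homeo (homeo.symm ⟨c, hcm⟩) : ℝ) := (h3 _).symm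
    _ = c := by rw [h2]

set_option maxHeartbeats 4000000

/-- Differentiable version: for Matkowski means built from differentiable
strictly increasing `fᵢ, gᵢ` with nonvanishing `(fᵢ+gᵢ)'` and with
`a i ≥ sup_{t ∈ I} fᵢ'(t)/(f_{i-1}'(t)+g_{i-1}'(t)) `, `b i ≥ sup_{t ∈ I}
gᵢ'(t)/(f_{i+1}'(t)+g_{i+1}'(t))` finite, the fixed point set `Φ_{(x,y)}` is nonempty and
compact for all `x < y` in `I`, and a singleton whenever the associated sequence `w`
(with `w (k+1)` the paper's `w_k`) is positive. -/
theorem stmt8 (I : Set ℝ) (hI : Set.OrdConnected I) (hne : I.Nonempty)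
    (n : ℕ) (hn : 2 ≤ n)
    (f g f' g' : Fin n → ℝ → ℝ)
    (hfd : ∀ i, ∀ t ∈ I, HasDerivWithinAt (f i) (f' i t) I t)
    (hgd : ∀ i, ∀ t ∈ I, HasDerivWithinAt (g i) (g' i t) I t)
    (hfm : ∀ i, StrictMonoOn (f i) I) (hgm : ∀ i, StrictMonoOn (g i) I)
    (hnv : ∀ i, ∀ t ∈ I, f' i t + g' i t ≠ 0)
    (a b : ℕ → ℝ)
    (ha : ∀ i : ℕ, ∀ _h1 : 2 ≤ i, ∀ _h2 : i ≤ n, ∀ t ∈ I,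
      f' ⟨i - 1, by omega⟩ t / (f' ⟨i - 2, by omega⟩ t + g' ⟨i - 2, by omega⟩ t) ≤ a i)
    (hb : ∀ i : ℕ, ∀ _h1 : 1 ≤ i, ∀ _h2 : i ≤ n - 1, ∀ t ∈ I,
      g' ⟨i - 1, by omega⟩ t / (f' ⟨i, by omega⟩ t + g' ⟨i, by omega⟩ t) ≤ b i)
    (M : Fin n → ℝ → ℝ → ℝ)
    (hM : ∀ i, ∀ x ∈ I, ∀ y ∈ I, x ≤ y →
      M i x y ∈ I ∧ f i (M i x y) + g i (M i x y) = f i x + g i y) :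
    (∀ x ∈ I, ∀ y ∈ I, x < y →
      (phiFixedSet n M x y).Nonempty ∧ IsCompact (phiFixedSet n M x y)) ∧
    (∀ w : ℕ → ℝ, w 0 = 1 → w 1 = 1 →
      (∀ i : ℕ, 1 ≤ i → i ≤ n - 1 → w (i + 1) = w i - a (i + 1) * b i * w (i - 1)) →
      (∀ i : ℕ, 1 ≤ i → i ≤ n - 1 → 0 < w (i + 1)) →
      ∀ x ∈ I, ∀ y ∈ I, x < y → ∃ ξ, phiFixedSet n M x y = {ξ}) := by
  have main : ∀ x, x ∈ I → ∀ y, y ∈ I → x < y →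
      (phiFixedSet n M x y).Nonempty ∧ IsCompact (phiFixedSet n M x y) ∧
      ∀ w : ℕ → ℝ, w 0 = 1 → w 1 = 1 →
        (∀ i : ℕ, 1 ≤ i → i ≤ n - 1 → w (i + 1) = w i - a (i + 1) * b i * w (i - 1)) →
        (∀ i : ℕ, 1 ≤ i → i ≤ n - 1 → 0 < w (i + 1)) →
        ∀ t ∈ phiFixedSet n M x y, ∀ s ∈ phiFixedSet n M x y, t = s := by
    intro x hxI y hyI hxy
    have hsub : Icc x y ⊆ I := hI.out hxI hyI
    have hxm : x ∈ Icc x y := left_mem_Icc.2 hxy.le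
    have hym : y ∈ Icc x y := right_mem_Icc.2 hxy.le
    have hfc : ∀ i, ContinuousOn (f i) I := fun i t ht => (hfd i t ht).continuousWithinAt
    have hgc : ∀ i, ContinuousOn (g i) I := fun i t ht => (hgd i t ht).continuousWithinAt
    have hhsm : ∀ i : Fin n, StrictMonoOn (fun u => f i u + g i u) I :=
      fun i => (hfm i).add (hgm i)
    set prevF : (Fin n → ℝ) → Fin n → ℝ := fun t i =>
      if _h : (i : ℕ) = 0 then x else t ⟨(i : ℕ) - 1, by have := i.isLt; omega⟩ with hprevF
    set nextF : (Fin n → ℝ) → Fin n → ℝ := fun t i =>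
      if _h : (i : ℕ) = n - 1 then y else t ⟨(i : ℕ) + 1, by have := i.isLt; omega⟩ with hnextF
    have hphi : ∀ t (i : Fin n), phiMap n M x y t i = M i (prevF t i) (nextF t i) :=
      fun t i => rfl
    have hprev : ∀ t : Fin n → ℝ, (∀ j, t j ∈ Icc x y) → Monotone t →
        ∀ i, prevF t i ∈ Icc x y ∧ prevF t i ≤ t i := by
      intro t hmem hmono i
      simp only [hprevF]
      split_ifs with h
      · exact ⟨hxm, (hmem i).1⟩
      · refine ⟨hmem _, hmono ?_⟩
        rw [Fin.le_def]
        exact Nat.sub_le _ _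
    have hnext : ∀ t : Fin n → ℝ, (∀ j, t j ∈ Icc x y) → Monotone t →
        ∀ i, nextF t i ∈ Icc x y ∧ t i ≤ nextF t i := by
      intro t hmem hmono i
      simp only [hnextF]
      split_ifs with h
      · exact ⟨hym, (hmem i).2⟩
      · refine ⟨hmem _, hmono ?_⟩
        rw [Fin.le_def]
        exact Nat.le_succ _
    have hfix_iff : ∀ t : Fin n → ℝ, (∀ j, t j ∈ Icc x y) → Monotone t →
        (phiMap n M x y t = t ↔
          ∀ i, f i (t i) + g i (t i) = f i (prevF t i) + g i (nextF t i)) := by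
      intro t hmem hmono
      have hple : ∀ i, prevF t i ≤ nextF t i := fun i =>
        le_trans (hprev t hmem hmono i).2 (hnext t hmem hmono i).2
      have hMi := fun i => hM i (prevF t i) (hsub (hprev t hmem hmono i).1)
        (nextF t i) (hsub (hnext t hmem hmono i).1) (hple i)
      constructor
      · intro h i
        have hc := congrFun h i
        rw [hphi] at hc
        rw [← hc]
        exact (hMi i).2
      · intro h
        funext i
        rw [hphi]
        exact (hhsm i).injOn (hMi i).1 (hsub (hmem i))
          (by rw [(hMi i).2, ← h i])
    -- compactness
    have hcube : IsCompact {t : Fin n → ℝ | ∀ j, t j ∈ Icc x y} := by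
      have : {t : Fin n → ℝ | ∀ j, t j ∈ Icc x y} = Set.pi univ (fun _ => Icc x y) := by
        ext t; simp only [Set.mem_univ_pi, Set.mem_setOf_eq]
      rw [this]
      exact isCompact_univ_pi (fun _ => isCompact_Icc)
    have hcubecl : IsClosed {t : Fin n → ℝ | ∀ j, t j ∈ Icc x y} := by
      have : {t : Fin n → ℝ | ∀ j, t j ∈ Icc x y} = ⋂ j, (fun t : Fin n → ℝ => t j) ⁻¹' Icc x y := by
        ext t; simp
      rw [this]
      exact isClosed_iInter (fun j => (isClosed_Icc).preimage (continuous_apply j))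
    have hmonocl : IsClosed {t : Fin n → ℝ | Monotone t} := by
      have : {t : Fin n → ℝ | Monotone t} =
          ⋂ (p : Fin n × Fin n) (_ : p.1 ≤ p.2), {t : Fin n → ℝ | t p.1 ≤ t p.2} := by
        ext t
        simp only [mem_iInter, mem_setOf_eq]
        exact ⟨fun h p hp => h hp, fun h i j hij => h (i, j) hij⟩
      rw [this]
      exact isClosed_iInter fun p => isClosed_iInter fun _ =>
        isClosed_le (continuous_apply _) (continuous_apply _)
    have hcompact : IsCompact (phiFixedSet n M x y) := by
      set C : Set (Fin n → ℝ) := {t | ∀ j, t j ∈ Icc x y} ∩ {t | Monotone t} ∩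
        ⋂ (i : Fin n), ({t | ∀ j, t j ∈ Icc x y} ∩
          (fun t => f i (t i) + g i (t i) - f i (prevF t i) - g i (nextF t i)) ⁻¹' {0}) with hC
      have hΦC : phiFixedSet n M x y = C := by
        ext t
        simp only [hC, phiFixedSet, mem_setOf_eq, mem_inter_iff, mem_iInter, mem_preimage,
          mem_singleton_iff]
        constructor
        · rintro ⟨h1, h2, h3⟩
          have := (hfix_iff t h1 h2).1 h3
          exact ⟨⟨h1, h2⟩, fun i => ⟨h1, by linarith [this i]⟩⟩
        · rintro ⟨⟨h1, h2⟩, h3⟩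
          exact ⟨h1, h2, (hfix_iff t h1 h2).2 (fun i => by linarith [(h3 i).2])⟩
      have hCcl : IsClosed C := by
        refine (hcubecl.inter hmonocl).inter (isClosed_iInter fun i => ?_)
        have hcont : ContinuousOn
            (fun t : Fin n → ℝ => f i (t i) + g i (t i) - f i (prevF t i) - g i (nextF t i))
            {t | ∀ j, t j ∈ Icc x y} := by
          have hmapsTo : ∀ (j : Fin n), Set.MapsTo (fun t : Fin n → ℝ => t j)
              {t : Fin n → ℝ | ∀ j, t j ∈ Icc x y} I := fun j t ht => hsub (ht j)
          have hev : ∀ (j : Fin n) (F : ℝ → ℝ), ContinuousOn F I →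
              ContinuousOn (fun t : Fin n → ℝ => F (t j)) {t | ∀ j, t j ∈ Icc x y} :=
            fun j F hF => hF.comp (continuous_apply j).continuousOn (hmapsTo j)
          have hprevc : ∀ (F : ℝ → ℝ), ContinuousOn F I →
              ContinuousOn (fun t : Fin n → ℝ => F (prevF t i)) {t | ∀ j, t j ∈ Icc x y} := by
            intro F hF
            simp only [hprevF]
            split_ifs with h
            · exact continuousOn_const
            · exact hev _ F hF
          have hnextc : ∀ (F : ℝ → ℝ), ContinuousOn F I →
              ContinuousOn (fun t : Fin n → ℝ => F (nextF t i)) {t | ∀ j, t j ∈ Icc x y} := by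
            intro F hF
            simp only [hnextF]
            split_ifs with h
            · exact continuousOn_const
            · exact hev _ F hF
          exact (((hev i (f i) (hfc i)).add (hev i (g i) (hgc i))).sub
            (hprevc (f i) (hfc i))).sub (hnextc (g i) (hgc i))
        exact hcont.preimage_isClosed_of_isClosed hcubecl isClosed_singleton
      rw [hΦC]
      exact hcube.of_isClosed_subset hCcl (fun t ht => ht.1.1)
    have hexists : (phiFixedSet n M x y).Nonempty := by
      set fN : ℕ → ℝ → ℝ := fun k => if h : k < n then f ⟨k, h⟩ else id with hfN
      set gN : ℕ → ℝ → ℝ := fun k => if h : k < n then g ⟨k, h⟩ else id with hgN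
      have hfNsm : ∀ k, StrictMonoOn (fN k) (Icc x y) := by
        intro k
        simp only [hfN]
        split_ifs with h
        · exact (hfm ⟨k, h⟩).mono hsub
        · exact fun u _ v _ huv => huv
      have hgNsm : ∀ k, StrictMonoOn (gN k) (Icc x y) := by
        intro k
        simp only [hgN]
        split_ifs with h
        · exact (hgm ⟨k, h⟩).mono hsub
        · exact fun u _ v _ huv => huv
      have hfNc : ∀ k, ContinuousOn (fN k) (Icc x y) := by
        intro k
        simp only [hfN]
        split_ifs with h
        · exact (hfc ⟨k, h⟩).mono hsub
        · exact continuousOn_id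
      have hgNc : ∀ k, ContinuousOn (gN k) (Icc x y) := by
        intro k
        simp only [hgN]
        split_ifs with h
        · exact (hgc ⟨k, h⟩).mono hsub
        · exact continuousOn_id
      have hζex : ∀ k : ℕ, ∃ ζ : ℝ → ℝ, Continuous ζ ∧ (∀ c, ζ c ∈ Icc x y) ∧
          ∀ c ∈ Icc (gN k x) (gN k y), gN k (ζ c) = c :=
        fun k => aux_inv hxy.le (gN k) (hgNsm k) (hgNc k)
      choose ζN hζc hζmem hζg using hζex
      set T : ℝ → ℕ → ℝ := fun s k =>
        (Nat.rec (motive := fun _ => ℝ × ℝ) (x, s)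
          (fun k p => (p.2, ζN k (min (gN k y) (fN k p.2 + gN k p.2 - fN k p.1)))) k).1
        with hT
      have hT0 : ∀ s, T s 0 = x := by
        intro s; rw [hT]; rfl
      have hT1 : ∀ s, T s 1 = s := by
        intro s; rw [hT]; rfl
      have hTs : ∀ s k, T s (k+2) =
          ζN k (min (gN k y) (fN k (T s (k+1)) + gN k (T s (k+1)) - fN k (T s k))) := by
        intro s k; rw [hT]
      have hkey : ∀ s ∈ Icc x y, ∀ k,
          T s k ∈ Icc x y ∧ T s (k+1) ∈ Icc x y ∧ T s k ≤ T s (k+1) := by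
        intro s hs k
        induction k with
        | zero =>
          simp only [Nat.zero_add]
          rw [hT0 s, hT1 s]
          exact ⟨hxm, hs, hs.1⟩
        | succ m ihm =>
          obtain ⟨h1, h2, h3⟩ := ihm
          have harg : gN m (T s (m+1)) ≤
              min (gN m y) (fN m (T s (m+1)) + gN m (T s (m+1)) - fN m (T s m)) := by
            apply le_min
            · exact (hgNsm m).monotoneOn h2 hym h2.2
            · have := (hfNsm m).monotoneOn h1 h2 h3
              linarith
          have hargmem : min (gN m y) (fN m (T s (m+1)) + gN m (T s (m+1)) - fN m (T s m)) ∈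
              Icc (gN m x) (gN m y) := by
            constructor
            · exact le_trans ((hgNsm m).monotoneOn hxm h2 h2.1) harg
            · exact min_le_left _ _
          have hmem2 : T s (m+2) ∈ Icc x y := by rw [hTs]; exact hζmem m _
          refine ⟨h2, hmem2, ?_⟩
          have hg2 : gN m (T s (m+2)) =
              min (gN m y) (fN m (T s (m+1)) + gN m (T s (m+1)) - fN m (T s m)) := by
            rw [hTs]; exact hζg m _ hargmem
          have hle2 : gN m (T s (m+1)) ≤ gN m (T s (m+2)) := by rw [hg2]; exact harg
          exact ((hgNsm m).le_iff_le h2 hmem2).1 hle2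
      have hTmem : ∀ s ∈ Icc x y, ∀ k, T s k ∈ Icc x y := fun s hs k => (hkey s hs k).1
      have hTmono : ∀ s ∈ Icc x y, Monotone (T s) :=
        fun s hs => monotone_nat_of_le_succ (fun k => (hkey s hs k).2.2)
      have hTcont : ∀ k, ContinuousOn (fun s => T s k) (Icc x y) ∧
          ContinuousOn (fun s => T s (k+1)) (Icc x y) := by
        intro k
        induction k with
        | zero =>
          simp only [Nat.zero_add]
          constructor
          · have e0 : (fun s : ℝ => T s 0) = fun _ => x := funext hT0
            rw [e0]; exact continuousOn_const
          · have e1 : (fun s : ℝ => T s 1) = fun s => s := funext hT1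
            rw [e1]; exact continuousOn_id
        | succ m ihm =>
          refine ⟨ihm.2, ?_⟩
          have heq2 : (fun s => T s (m+2)) = fun s =>
              ζN m (min (gN m y) (fN m (T s (m+1)) + gN m (T s (m+1)) - fN m (T s m))) := by
            funext s; rw [hTs]
          rw [heq2]
          have hcl : Continuous (fun v : ℝ => ζN m (min (gN m y) v)) :=
            (hζc m).comp (continuous_const.min continuous_id)
          apply hcl.comp_continuousOn
          have hm1 : MapsTo (fun s => T s m) (Icc x y) (Icc x y) := fun s hs => hTmem s hs m
          have hm2 : MapsTo (fun s => T s (m+1)) (Icc x y) (Icc x y) :=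
            fun s hs => hTmem s hs (m+1)
          exact (((hfNc m).comp ihm.2 hm2).add ((hgNc m).comp ihm.2 hm2)).sub
            ((hfNc m).comp ihm.1 hm1)
      have hTx : ∀ k, T x k = x ∧ T x (k+1) = x := by
        intro k
        induction k with
        | zero => exact ⟨hT0 x, hT1 x⟩
        | succ m ihm =>
          refine ⟨ihm.2, ?_⟩
          rw [hTs, ihm.1, ihm.2]
          have hmin : min (gN m y) (fN m x + gN m x - fN m x) = gN m x := by
            rw [show fN m x + gN m x - fN m x = gN m x from by ring]
            exact min_eq_right ((hgNsm m).monotoneOn hxm hym hxy.le)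
          rw [hmin]
          have hgg := hζg m (gN m x) ⟨le_rfl, (hgNsm m).monotoneOn hxm hym hxy.le⟩
          exact (hgNsm m).injOn (hζmem m _) hxm hgg
      set D : ℕ → ℝ → ℝ := fun i s =>
        fN i (T s (i+1)) + gN i (T s (i+1)) - fN i (T s i) - gN i y with hD
      have hDcont : ∀ i : ℕ, ContinuousOn (D i) (Icc x y) := by
        intro i
        simp only [hD]
        have hm1 : MapsTo (fun s => T s i) (Icc x y) (Icc x y) := fun s hs => hTmem s hs i
        have hm2 : MapsTo (fun s => T s (i+1)) (Icc x y) (Icc x y) :=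
          fun s hs => hTmem s hs (i+1)
        exact ((((hfNc i).comp (hTcont i).2 hm2).add ((hgNc i).comp (hTcont i).2 hm2)).sub
          ((hfNc i).comp (hTcont i).1 hm1)).sub continuousOn_const
      set S : Set ℝ := ⋃ (i : Fin n), (Icc x y ∩ D (i:ℕ) ⁻¹' Ici 0) with hS
      have hScl : IsClosed S := isClosed_iUnion_of_finite (fun i : Fin n =>
        (hDcont i).preimage_isClosed_of_isClosed isClosed_Icc isClosed_Ici)
      have hyS : y ∈ S := by
        rw [hS]
        refine mem_iUnion.2 ⟨⟨0, by omega⟩, hym, ?_⟩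
        simp only [mem_preimage, mem_Ici, hD, Nat.zero_add]
        rw [hT1 y, hT0 y]
        have hlt : fN 0 x < fN 0 y := (hfNsm 0) hxm hym hxy
        linarith
      have hSne : S.Nonempty := ⟨y, hyS⟩
      have hSbdd : BddBelow S := by
        refine ⟨x, ?_⟩
        rintro u hu
        rw [hS] at hu
        obtain ⟨i, hi⟩ := mem_iUnion.1 hu
        exact hi.1.1
      set σ : ℝ := sInf S with hσ
      have hσS : σ ∈ S := hScl.csInf_mem hSne hSbdd
      have hσmem : σ ∈ Icc x y := by
        obtain ⟨i, hi⟩ := mem_iUnion.1 hσS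
        exact hi.1
      have hDle : ∀ i : Fin n, D (i:ℕ) σ ≤ 0 := by
        by_contra hcon
        push_neg at hcon
        obtain ⟨j, hj⟩ := hcon
        have hxσ : x < σ := by
          rcases eq_or_lt_of_le hσmem.1 with h | h
          · exfalso
            have h1 : D (j:ℕ) x = gN (j:ℕ) x - gN (j:ℕ) y := by
              simp only [hD]
              rw [(hTx (j:ℕ)).2, (hTx (j:ℕ)).1]
              ring
            have hlt : gN (j:ℕ) x < gN (j:ℕ) y := (hgNsm (j:ℕ)) hxm hym hxy
            rw [← h, h1] at hj
            linarith
          · exact h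
        have hcw : ContinuousWithinAt (D (j:ℕ)) (Icc x y) σ :=
          (hDcont (j:ℕ)).continuousWithinAt hσmem
        have hV : (D (j:ℕ)) ⁻¹' Ioi 0 ∈ 𝓝[Icc x y] σ := hcw (Ioi_mem_nhds hj)
        have hsub2 : Ioo x σ ⊆ Icc x y := fun u hu => ⟨hu.1.le, le_trans hu.2.le hσmem.2⟩
        have hle2 : 𝓝[Ioo x σ] σ ≤ 𝓝[Icc x y] σ := nhdsWithin_mono _ hsub2
        haveI hnb : (𝓝[Ioo x σ] σ).NeBot := by
          rw [← mem_closure_iff_nhdsWithin_neBot, closure_Ioo hxσ.ne]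
          exact ⟨hxσ.le, le_rfl⟩
        have hV3 : ∀ᶠ u in 𝓝[Ioo x σ] σ, u ∈ Ioo x σ ∧ 0 < D (j:ℕ) u := by
          filter_upwards [hle2 hV, self_mem_nhdsWithin] with u h1 h2
          exact ⟨h2, h1⟩
        obtain ⟨u, hu1, hu2⟩ := hV3.exists
        have huS : u ∈ S := mem_iUnion.2 ⟨j, hsub2 hu1, le_of_lt hu2⟩
        have hcontr : σ ≤ u := csInf_le hSbdd huS
        linarith [hu1.2]
      obtain ⟨i0, hi0⟩ := mem_iUnion.1 hσS
      have hD0 : D (i0:ℕ) σ = 0 := le_antisymm (hDle i0) hi0.2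
      have hstep : ∀ i : ℕ, i < n →
          gN i (T σ (i+2)) = fN i (T σ (i+1)) + gN i (T σ (i+1)) - fN i (T σ i) := by
        intro i hi
        have hDi : D i σ ≤ 0 := hDle ⟨i, hi⟩
        have hv1 : fN i (T σ (i+1)) + gN i (T σ (i+1)) - fN i (T σ i) ≤ gN i y := by
          simp only [hD] at hDi
          linarith
        have hv0 : gN i x ≤ fN i (T σ (i+1)) + gN i (T σ (i+1)) - fN i (T σ i) := by
          have h3 := (hkey σ hσmem i).2.2
          have h4 := (hfNsm i).monotoneOn (hkey σ hσmem i).1 (hkey σ hσmem i).2.1 h3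
          have h5 := (hgNsm i).monotoneOn hxm (hkey σ hσmem i).2.1 (hkey σ hσmem i).2.1.1
          linarith
        rw [hTs, min_eq_right hv1]
        exact hζg i _ ⟨hv0, hv1⟩
      have hcasc : ∀ i : ℕ, i + 2 ≤ n → D i σ = 0 → False := by
        intro i hi2 hDi0
        have hTy2 : T σ (i+2) = y := by
          have heq2 : gN i (T σ (i+2)) = gN i y := by
            rw [hstep i (by omega)]
            simp only [hD] at hDi0
            linarith
          exact (hgNsm i).injOn (hTmem σ hσmem (i+2)) hym heq2
        have hCA : ∀ j : ℕ, 1 ≤ j → j + 1 ≤ n → T σ (j+1) = y → T σ j = y := by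
          intro j hj1 hjn hTy
          have hDj : D j σ ≤ 0 := hDle ⟨j, by omega⟩
          simp only [hD] at hDj
          rw [hTy] at hDj
          have hge : fN j (T σ j) ≤ fN j y :=
            (hfNsm j).monotoneOn (hTmem σ hσmem j) hym (hTmem σ hσmem j).2
          have heq3 : fN j (T σ j) = fN j y := by linarith
          exact (hfNsm j).injOn (hTmem σ hσmem j) hym heq3
        have hdown : ∀ m, m ≤ i + 1 → T σ (i + 2 - m) = y := by
          intro m
          induction m with
          | zero => intro _; exact hTy2
          | succ p ihp =>
            intro hp
            have hprev2 := ihp (by omega)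
            have hj : i + 2 - (p+1) = i + 1 - p := by omega
            have hres := hCA (i + 1 - p) (by omega) (by omega)
              (by rw [show i+1-p+1 = i+2-p from by omega]; exact hprev2)
            rw [hj]
            exact hres
        have hσy : σ = y := by
          have h1 := hdown (i+1) le_rfl
          rw [show i + 2 - (i+1) = 1 from by omega] at h1
          exact (hT1 σ).symm.trans h1
        have hD0' : D 0 σ ≤ 0 := hDle ⟨0, by omega⟩
        rw [hσy] at hD0'
        simp only [hD] at hD0'
        rw [show (0:ℕ)+1 = 1 from rfl, hT1 y, hT0 y] at hD0'
        have hlt : fN 0 x < fN 0 y := (hfNsm 0) hxm hym hxy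
        linarith
      have hDn : D (n-1) σ = 0 := by
        by_cases hc : (i0:ℕ) + 2 ≤ n
        · exact (hcasc (i0:ℕ) hc hD0).elim
        · have hee : n - 1 = (i0:ℕ) := by have := i0.isLt; omega
          rw [hee]
          exact hD0
      set ξ : Fin n → ℝ := fun i => T σ ((i:ℕ)+1) with hξ
      have hmemξ : ∀ j, ξ j ∈ Icc x y := by
        intro j
        simp only [hξ]
        exact hTmem σ hσmem ((j:ℕ)+1)
      have hmonoξ : Monotone ξ := by
        intro i j hij
        simp only [hξ]
        exact hTmono σ hσmem (Nat.succ_le_succ (show (i:ℕ) ≤ (j:ℕ) from hij))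
      refine ⟨ξ, hmemξ, hmonoξ, (hfix_iff ξ hmemξ hmonoξ).2 ?_⟩
      intro i
      have hfNi : fN (i:ℕ) = f i := by simp only [hfN]; rw [dif_pos i.isLt]
      have hgNi : gN (i:ℕ) = g i := by simp only [hgN]; rw [dif_pos i.isLt]
      have hprevv : prevF ξ i = T σ (i:ℕ) := by
        simp only [hprevF]
        split_ifs with h
        · rw [h]
          exact (hT0 σ).symm
        · simp only [hξ]
          rw [show (i:ℕ) - 1 + 1 = (i:ℕ) from by omega]
      by_cases hlast : (i:ℕ) = n - 1
      · have hnextv : nextF ξ i = y := by simp only [hnextF]; rw [dif_pos hlast]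
        have hDn' : D (i:ℕ) σ = 0 := by rw [hlast]; exact hDn
        simp only [hD] at hDn'
        rw [hprevv, hnextv]
        simp only [hξ]
        rw [← hfNi, ← hgNi]
        linarith [hDn']
      · have hnextv : nextF ξ i = T σ ((i:ℕ)+2) := by
          simp only [hnextF]
          rw [dif_neg hlast]
        have hst := hstep (i:ℕ) i.isLt
        rw [hprevv, hnextv]
        simp only [hξ]
        rw [← hfNi, ← hgNi]
        linarith [hst]

    have huniq : ∀ w : ℕ → ℝ, w 0 = 1 → w 1 = 1 →
        (∀ i : ℕ, 1 ≤ i → i ≤ n - 1 → w (i + 1) = w i - a (i + 1) * b i * w (i - 1)) →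
        (∀ i : ℕ, 1 ≤ i → i ≤ n - 1 → 0 < w (i + 1)) →
        ∀ t ∈ phiFixedSet n M x y, ∀ s ∈ phiFixedSet n M x y, t = s := by
      intro w hw0 hw1 hrecw hposw t ht s hs
      obtain ⟨htmem, htmono, htfix⟩ := ht
      obtain ⟨hsmem, hsmono, hsfix⟩ := hs
      have heqt := (hfix_iff t htmem htmono).1 htfix
      have heqs := (hfix_iff s hsmem hsmono).1 hsfix
      have htI : ∀ i, t i ∈ I := fun i => hsub (htmem i)
      have hsI : ∀ i, s i ∈ I := fun i => hsub (hsmem i)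
      have hf'0 : ∀ (i : Fin n), ∀ u ∈ I, 0 ≤ f' i u := fun i u hu =>
        aux_nonneg_deriv hI hxI hyI hxy (hfm i).monotoneOn hu (hfd i u hu)
      have hg'0 : ∀ (i : Fin n), ∀ u ∈ I, 0 ≤ g' i u := fun i u hu =>
        aux_nonneg_deriv hI hxI hyI hxy (hgm i).monotoneOn hu (hgd i u hu)
      have hh'pos : ∀ (i : Fin n), ∀ u ∈ I, 0 < f' i u + g' i u := fun i u hu =>
        lt_of_le_of_ne (add_nonneg (hf'0 i u hu) (hg'0 i u hu)) (Ne.symm (hnv i u hu))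
      have anonneg : ∀ k, 2 ≤ k → k ≤ n → 0 ≤ a k := fun k h1 h2 =>
        le_trans (div_nonneg (hf'0 _ x hxI) (hh'pos ⟨k-2, by omega⟩ x hxI).le)
          (ha k h1 h2 x hxI)
      have bnonneg : ∀ k, 1 ≤ k → k ≤ n - 1 → 0 ≤ b k := fun k h1 h2 =>
        le_trans (div_nonneg (hg'0 _ x hxI) (hh'pos ⟨k, by omega⟩ x hxI).le)
          (hb k h1 h2 x hxI)
      have hwpos : ∀ k, k ≤ n → 0 < w k := by
        intro k hk
        match k with
        | 0 => rw [hw0]; exact one_pos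
        | 1 => rw [hw1]; exact one_pos
        | (m+2) => exact hposw (m+1) (by omega) (by omega)
      have habs : ∀ (F F' : ℝ → ℝ), (∀ u ∈ I, HasDerivWithinAt F (F' u) I u) →
          MonotoneOn F I → ∀ (j : Fin n) (c : ℝ), (∀ u ∈ I, F' u ≤ c * (f' j u + g' j u)) →
          ∀ p, p ∈ I → ∀ q, q ∈ I →
            |F p - F q| ≤ c * |(f j p + g j p) - (f j q + g j q)| := by
        intro F F' hFd hFm j c hc p hp q hq
        have hGd : ∀ u ∈ I, HasDerivWithinAt (fun u => f j u + g j u) (f' j u + g' j u) I u :=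
          fun u hu => (hfd j u hu).add (hgd j u hu)
        have key : ∀ u, u ∈ I → ∀ v, v ∈ I → u ≤ v →
            F v - F u ≤ c * ((f j v + g j v) - (f j u + g j u)) :=
          fun u hu v hv huv => aux_mvt hI hFd hGd hc hu hv huv
        rcases le_total q p with h | h
        · have hm1 : f j q + g j q ≤ f j p + g j p := (hhsm j).monotoneOn hq hp h
          have hm2 : F q ≤ F p := hFm hq hp h
          rw [abs_of_nonneg (by linarith : (0:ℝ) ≤ F p - F q),
            abs_of_nonneg (by linarith : (0:ℝ) ≤ f j p + g j p - (f j q + g j q))]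
          exact key q hq p hp h
        · have hm1 : f j p + g j p ≤ f j q + g j q := (hhsm j).monotoneOn hp hq h
          have hm2 : F p ≤ F q := hFm hp hq h
          rw [abs_sub_comm (F p) (F q), abs_sub_comm (f j p + g j p) (f j q + g j q)]
          rw [abs_of_nonneg (by linarith : (0:ℝ) ≤ F q - F p),
            abs_of_nonneg (by linarith : (0:ℝ) ≤ f j q + g j q - (f j p + g j p))]
          exact key p hp q hq h
      set E : ℕ → ℝ := fun k => if h : 0 < k ∧ k ≤ n then
          |(f ⟨k-1, by omega⟩ (t ⟨k-1, by omega⟩) + g ⟨k-1, by omega⟩ (t ⟨k-1, by omega⟩)) -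
           (f ⟨k-1, by omega⟩ (s ⟨k-1, by omega⟩) + g ⟨k-1, by omega⟩ (s ⟨k-1, by omega⟩))|
        else 0 with hE
      have hE0 : E 0 = 0 := by rw [hE]; simp
      have hEbig : ∀ k, n < k → E k = 0 := by
        intro k hk
        simp only [hE]
        rw [dif_neg (by omega : ¬(0 < k ∧ k ≤ n))]
      have hEnn : ∀ k, 0 ≤ E k := by
        intro k
        simp only [hE]
        split_ifs
        · exact abs_nonneg _
        · exact le_rfl
      have hEF : ∀ (i : Fin n), E ((i:ℕ)+1) =
          |(f i (t i) + g i (t i)) - (f i (s i) + g i (s i))| := by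
        intro i
        simp only [hE]
        rw [dif_pos (by constructor <;> omega : 0 < (i:ℕ)+1 ∧ (i:ℕ)+1 ≤ n)]
        rfl
      have chain : ∀ k, 1 ≤ k → k ≤ n → E k ≤ a k * E (k-1) + b k * E (k+1) := by
        intro k hk1 hkn
        set i : Fin n := ⟨k-1, by omega⟩ with hi
        have hiv : (i:ℕ) = k - 1 := rfl
        have hki : k = (i : ℕ) + 1 := by omega
        have hsplit : E k ≤ |f i (prevF t i) - f i (prevF s i)| +
            |g i (nextF t i) - g i (nextF s i)| := by
          rw [hki, hEF i, heqt i, heqs i]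
          have hring : (f i (prevF t i) + g i (nextF t i)) -
              (f i (prevF s i) + g i (nextF s i))
              = (f i (prevF t i) - f i (prevF s i)) +
                (g i (nextF t i) - g i (nextF s i)) := by ring
          rw [hring]
          exact abs_add_le _ _
        have hfterm : |f i (prevF t i) - f i (prevF s i)| ≤ a k * E (k-1) := by
          by_cases h0 : (i : ℕ) = 0
          · have hpt : prevF t i = x := by simp only [hprevF]; rw [dif_pos h0]
            have hps : prevF s i = x := by simp only [hprevF]; rw [dif_pos h0]
            have hk1' : k - 1 = 0 := by omega
            rw [hpt, hps, hk1', sub_self, abs_zero, hE0, mul_zero]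
          · set j : Fin n := ⟨(i:ℕ) - 1, by omega⟩ with hj
            have hpt : prevF t i = t j := by simp only [hprevF]; rw [dif_neg h0]
            have hps : prevF s i = s j := by simp only [hprevF]; rw [dif_neg h0]
            have hkj : k - 1 = (j:ℕ) + 1 := by
              have : (j:ℕ) = (i:ℕ) - 1 := rfl
              omega
            rw [hpt, hps, hkj, hEF j]
            have hbnd : ∀ u ∈ I, f' i u ≤ a k * (f' j u + g' j u) := by
              intro u hu
              have h1 := ha k (by omega) (by omega) u hu
              rw [div_le_iff₀ (hh'pos ⟨k-2, by omega⟩ u hu)] at h1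
              exact h1
            exact habs (f i) (f' i) (hfd i) (hfm i).monotoneOn j (a k) hbnd
              (t j) (htI j) (s j) (hsI j)
        have hgterm : |g i (nextF t i) - g i (nextF s i)| ≤ b k * E (k+1) := by
          by_cases h1 : (i : ℕ) = n - 1
          · have hnt : nextF t i = y := by simp only [hnextF]; rw [dif_pos h1]
            have hns : nextF s i = y := by simp only [hnextF]; rw [dif_pos h1]
            have hk' : n < k + 1 := by omega
            rw [hnt, hns, sub_self, abs_zero, hEbig (k+1) hk', mul_zero]
          · have hkn' : k < n := by omega
            set j : Fin n := ⟨k, hkn'⟩ with hj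
            have hval : (⟨(i:ℕ)+1, by have := i.isLt; omega⟩ : Fin n) = j := by
              apply Fin.ext; show (i:ℕ) + 1 = k; omega
            have hnt : nextF t i = t j := by
              simp only [hnextF]; rw [dif_neg h1, hval]
            have hns : nextF s i = s j := by
              simp only [hnextF]; rw [dif_neg h1, hval]
            have hkj : k + 1 = (j:ℕ) + 1 := rfl
            rw [hnt, hns, hkj, hEF j]
            have hbnd : ∀ u ∈ I, g' i u ≤ b k * (f' j u + g' j u) := by
              intro u hu
              have h2 := hb k (by omega) (by omega) u hu
              rw [div_le_iff₀ (hh'pos ⟨k, by omega⟩ u hu)] at h2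
              exact h2
            exact habs (g i) (g' i) (hgd i) (hgm i).monotoneOn j (b k) hbnd
              (t j) (htI j) (s j) (hsI j)
        calc E k ≤ _ := hsplit
        _ ≤ a k * E (k-1) + b k * E (k+1) := add_le_add hfterm hgterm
      have chain2 : ∀ k, 1 ≤ k → k ≤ n - 1 → w k * E k ≤ b k * w (k-1) * E (k+1) := by
        intro k
        induction k with
        | zero => omega
        | succ m ih =>
          intro _ hle
          by_cases hm : m = 0
          · subst hm
            have hch : E 1 ≤ a 1 * E 0 + b 1 * E 2 := chain 1 (by omega) (by omega)
            rw [hE0, mul_zero, zero_add] at hch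
            show w 1 * E 1 ≤ b 1 * w 0 * E 2
            rw [hw1, hw0]
            linarith [hch]
          · have ih' := ih (by omega) (by omega)
            have hrec' := hrecw m (by omega) (by omega)
            have hch := chain (m+1) (by omega) (by omega)
            have ha' : 0 ≤ a (m+1) := anonneg (m+1) (by omega) (by omega)
            have hwm : 0 < w m := hwpos m (by omega)
            have A := mul_le_mul_of_nonneg_left ih' ha'
            have B : w m * E (m+1) ≤ w m * (a (m+1) * E m + b (m+1) * E (m+1+1)) :=
              mul_le_mul_of_nonneg_left hch hwm.le
            show w (m+1) * E (m+1) ≤ b (m+1) * w m * E (m+1+1)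
            rw [hrec']
            nlinarith [A, B]
      have hnn : n - 1 + 1 = n := by omega
      have cn := chain n (by omega) le_rfl
      rw [hEbig (n+1) (by omega), mul_zero, add_zero] at cn
      have c2 := chain2 (n-1) (by omega) le_rfl
      rw [hnn] at c2
      have hrecn := hrecw (n-1) (by omega) le_rfl
      rw [hnn] at hrecn
      have hwn : 0 < w n := hwpos n le_rfl
      have han : 0 ≤ a n := anonneg n hn le_rfl
      have hbn1 : 0 ≤ b (n-1) := bnonneg (n-1) (by omega) le_rfl
      have hwn2 : 0 < w (n-2) := hwpos (n-2) (by omega)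
      have hwn2' : w (n-1-1) = w (n-2) := by rw [show n-1-1 = n-2 from by omega]
      rw [hwn2'] at c2 hrecn
      have X := mul_le_mul_of_nonneg_left cn (mul_nonneg hbn1 hwn2.le)
      have key2 : a n * b (n-1) * w (n-2) = w (n-1) - w n := by linarith [hrecn]
      have hEn1 : E (n-1) = 0 := by
        have hle : w n * E (n-1) ≤ 0 := by nlinarith [c2, X, key2]
        have := hEnn (n-1)
        nlinarith [hle, hwn]
      have hEn : E n = 0 := by
        rw [hEn1, mul_zero] at cn
        exact le_antisymm cn (hEnn n)
      have down : ∀ d k, 1 ≤ k → k + d = n - 1 → E k = 0 := by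
        intro d
        induction d with
        | zero =>
          intro k hk1 hkd
          rw [show k = n - 1 from by omega]
          exact hEn1
        | succ m ih =>
          intro k hk1 hkd
          have hnext2 : E (k+1) = 0 := ih (k+1) (by omega) (by omega)
          have c := chain2 k hk1 (by omega)
          rw [hnext2, mul_zero] at c
          have hwk : 0 < w k := hwpos k (by omega)
          have h1 : E k ≤ 0 := by nlinarith [c, hwk]
          exact le_antisymm h1 (hEnn k)
      have Eall : ∀ k, 1 ≤ k → k ≤ n → E k = 0 := by
        intro k h1 h2
        rcases eq_or_lt_of_le h2 with h | h
        · rw [h]; exact hEn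
        · exact down (n-1-k) k h1 (by omega)
      funext i
      have hEi := Eall ((i:ℕ)+1) (by omega) (by omega)
      rw [hEF i] at hEi
      have heq2 : f i (t i) + g i (t i) = f i (s i) + g i (s i) := by
        have := abs_eq_zero.1 hEi
        linarith
      exact (hhsm i).injOn (htI i) (hsI i) heq2

    exact ⟨hexists, hcompact, huniq⟩
  constructor
  · intro x hx y hy hxy
    exact ⟨(main x hx y hy hxy).1, (main x hx y hy hxy).2.1⟩
  · intro w hw0 hw1 hrec hpos x hx y hy hxy
    obtain ⟨ξ, hξ⟩ := (main x hx y hy hxy).1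
    refine ⟨ξ, ?_⟩
    ext u
    simp only [Set.mem_singleton_iff]
    exact ⟨fun hu => (main x hx y hy hxy).2.2 w hw0 hw1 hrec hpos u hu ξ hξ,
      fun h => h ▸ hξ⟩
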